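/- Let X be a path connected Polish space and x ∈ X. Then the set of loops l ∈ L_x such that for some positive integer n the path-homotopy class [l]ⁿ lies in the commutator subgroup [π₁(X,x), π₁(X,x)] is an analytic subset of the loop space L_x. (This set is the loop set of the kernel of the natural map π₁(X,x) → Ab(X)/tor(Ab(X)).) -/

import Mathlib

open CategoryTheory
open scoped Cardinal unitInterval

attribute [local instance] Path.Homotopic.setoid

/-- The path-homotopy class of a loop `l` based at `x`, as an element of the
fundamental group `π₁(X, x)`. -/
noncomputable def pathClass {X : Type u} [TopologicalSpace X] {x : X} (l : Path x x) :
    FundamentalGroup X x :=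
  FundamentalGroup.fromPath (⟦l⟧ : Path.Homotopic.Quotient x x)

/-!
Two loops are path-homotopic iff they are joined by a path in the Polish space of loops, so
the homotopy relation is analytic, being the image of the Polish space `C(I, Path x x)` under
`γ ↦ (γ 0, γ 1)`. Hence the subsets of `π₁(X, x)` with analytic loop set are closed under
taking images of analytic sets of loops, products, inverses and countable unions, so under
generating subgroups. The commutator subgroup is generated by the classes of commutator loops,
a continuous image of the space of pairs of loops, and the set in question is the union over
`n > 0` of the preimages of its loop set under the continuous maps `l ↦ lⁿ`.
-/

open MeasureTheory
open scoped Pointwise commutatorElement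

namespace MeasureTheory

theorem AnalyticSet.inter {α : Type*} [TopologicalSpace α] [T2Space α] {s t : Set α}
    (hs : AnalyticSet s) (ht : AnalyticSet t) : AnalyticSet (s ∩ t) := by
  rw [Set.inter_eq_iInter]
  exact AnalyticSet.iInter fun b => by cases b <;> assumption

theorem AnalyticSet.union {α : Type*} [TopologicalSpace α] {s t : Set α}
    (hs : AnalyticSet s) (ht : AnalyticSet t) : AnalyticSet (s ∪ t) := by
  rw [Set.union_eq_iUnion]
  exact AnalyticSet.iUnion fun b => by cases b <;> assumption

theorem analyticSet_setOf_joined {Y : Type*} [TopologicalSpace Y] [PolishSpace Y] :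
    AnalyticSet {p : Y × Y | Joined p.1 p.2} := by
  let := TopologicalSpace.upgradeIsCompletelyMetrizable Y
  convert analyticSet_range_of_polishSpace
    ((continuous_eval_const (0 : I)).prodMk (continuous_eval_const (1 : I)) :
      Continuous fun γ : C(I, Y) => (γ 0, γ 1))
  ext ⟨a, b⟩
  exact ⟨fun ⟨γ⟩ => ⟨γ.toContinuousMap, by simp⟩, fun ⟨γ, h⟩ => by
    simp only [Prod.mk.injEq] at h
    exact h.1 ▸ h.2 ▸ ⟨⟨γ, rfl, rfl⟩⟩⟩

end MeasureTheory

theorem Submonoid.coe_closure_eq_iUnion_pow {M : Type*} [Monoid M] (s : Set M) :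
    (Submonoid.closure s : Set M) = ⋃ n : ℕ, s ^ n := by
  refine subset_antisymm (fun a ha => ?_)
    (Set.iUnion_subset fun n => Submonoid.pow_subset subset_closure)
  induction ha using Submonoid.closure_induction with
  | mem a ha => exact Set.mem_iUnion.2 ⟨1, by rwa [pow_one]⟩
  | one => exact Set.mem_iUnion.2 ⟨0, by rw [pow_zero]; exact Set.one_mem_one⟩
  | mul a b _ _ ha hb =>
    obtain ⟨m, ha⟩ := Set.mem_iUnion.1 ha
    obtain ⟨n, hb⟩ := Set.mem_iUnion.1 hb
    exact Set.mem_iUnion.2 ⟨m + n, by rw [pow_add]; exact Set.mul_mem_mul ha hb⟩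

namespace Path

variable {X : Type*} [TopologicalSpace X] {x y : X}

instance [PolishSpace X] : PolishSpace (Path x y) := by
  let := TopologicalSpace.upgradeIsCompletelyMetrizable X
  refine Topology.IsClosedEmbedding.polishSpace (f := ((↑) : Path x y → C(I, X)))
    ⟨⟨⟨rfl⟩, fun p q h => ?_⟩, ?_⟩
  · ext t
    exact DFunLike.congr_fun h t
  · rw [range_coe]
    exact (isClosed_eq (continuous_eval_const 0) continuous_const).inter
      (isClosed_eq (continuous_eval_const 1) continuous_const)

theorem homotopic_iff_joined {p q : Path x y} : p.Homotopic q ↔ Joined p q := by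
  constructor
  · rintro ⟨H⟩
    exact ⟨⟨⟨H.eval, continuous_uncurry_iff.1 H.continuous⟩, H.eval_zero, H.eval_one⟩⟩
  · rintro ⟨γ⟩
    refine ⟨⟨⟨⟨fun st => γ st.1 st.2, continuous_uncurry_iff.2 γ.continuous⟩,
      fun t => ?_, fun t => ?_⟩, ?_⟩⟩
    · simp
    · simp
    · rintro s t (rfl | rfl) <;> simp

theorem analyticSet_setOf_homotopic [PolishSpace X] :
    AnalyticSet {pq : Path x y × Path x y | pq.1.Homotopic pq.2} := by
  simp_rw [homotopic_iff_joined]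
  exact analyticSet_setOf_joined

end Path

section LoopSet

variable {X : Type*} [TopologicalSpace X] {x : X}

def loopSet (S : Set (FundamentalGroup X x)) : Set (Path x x) := pathClass ⁻¹' S

theorem pathClass_eq_pathClass_iff {p q : Path x x} :
    pathClass p = pathClass q ↔ p.Homotopic q :=
  Quotient.eq

theorem pathClass_surjective :
    Function.Surjective (pathClass : Path x x → FundamentalGroup X x) :=
  fun g => Quotient.exists_rep (FundamentalGroup.toPath g)

theorem pathClass_refl : pathClass (Path.refl x) = 1 := rfl

/-- Multiplication in `FundamentalGroup X x` is composition of morphisms, so it reverses the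
order of concatenation. -/
theorem pathClass_trans (p q : Path x x) :
    pathClass (p.trans q) = pathClass q * pathClass p := rfl

theorem pathClass_symm (p : Path x x) : pathClass p.symm = (pathClass p)⁻¹ :=
  eq_inv_of_mul_eq_one_left <| by
    rw [← pathClass_trans, ← pathClass_refl, pathClass_eq_pathClass_iff]
    exact ⟨(Path.Homotopy.reflTransSymm p).symm⟩

theorem image_pathClass_trans_loopSet (S T : Set (FundamentalGroup X x)) :
    pathClass (x := x) ''
        ((fun pq : Path x x × Path x x => pq.1.trans pq.2) '' (loopSet T ×ˢ loopSet S)) =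
      S * T := by
  rw [Set.image_image]
  ext g
  constructor
  · rintro ⟨⟨p, q⟩, ⟨hp, hq⟩, rfl⟩
    exact ⟨_, hq, _, hp, rfl⟩
  · rintro ⟨a, ha, b, hb, rfl⟩
    obtain ⟨q, rfl⟩ := pathClass_surjective a
    obtain ⟨p, rfl⟩ := pathClass_surjective b
    exact ⟨(p, q), ⟨hb, ha⟩, rfl⟩

theorem loopSet_inv (S : Set (FundamentalGroup X x)) :
    loopSet S⁻¹ = Path.symm ⁻¹' loopSet S := by
  ext l
  simp [loopSet, pathClass_symm]

noncomputable def commutatorLoop (p q : Path x x) : Path x x :=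
  ((q.symm.trans p.symm).trans q).trans p

theorem pathClass_commutatorLoop (p q : Path x x) :
    pathClass (commutatorLoop p q) = ⁅pathClass p, pathClass q⁆ := by
  simp only [commutatorLoop, pathClass_trans, pathClass_symm, commutatorElement_def, mul_assoc]

theorem continuous_commutatorLoop :
    Continuous fun pq : Path x x × Path x x => commutatorLoop pq.1 pq.2 :=
  (((Path.continuous_symm.comp continuous_snd).path_trans
    (Path.continuous_symm.comp continuous_fst)).path_trans continuous_snd).path_trans
    continuous_fst

noncomputable def loopPow (l : Path x x) : ℕ → Path x x
  | 0 => Path.refl x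
  | n + 1 => (loopPow l n).trans l

theorem pathClass_loopPow (l : Path x x) (n : ℕ) :
    pathClass (loopPow l n) = pathClass l ^ n := by
  induction n with
  | zero => exact pathClass_refl
  | succ n ih => rw [loopPow, pathClass_trans, ih, pow_succ']

theorem continuous_loopPow (n : ℕ) : Continuous fun l : Path x x => loopPow l n := by
  induction n with
  | zero => exact continuous_const
  | succ n ih => exact ih.path_trans continuous_id

variable [PolishSpace X]

theorem analyticSet_loopSet_image {A : Set (Path x x)} (hA : AnalyticSet A) :
    AnalyticSet (loopSet (pathClass '' A)) := by
  have : loopSet (pathClass '' A) =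
      Prod.snd '' ({pq : Path x x × Path x x | pq.1.Homotopic pq.2} ∩ Prod.fst ⁻¹' A) := by
    ext l
    simp [loopSet, pathClass_eq_pathClass_iff, and_comm]
  rw [this]
  exact (Path.analyticSet_setOf_homotopic.inter (hA.preimage continuous_fst)).image_of_continuous
    continuous_snd

theorem analyticSet_loopSet_mul {S T : Set (FundamentalGroup X x)}
    (hS : AnalyticSet (loopSet S)) (hT : AnalyticSet (loopSet T)) :
    AnalyticSet (loopSet (S * T)) := by
  rw [← image_pathClass_trans_loopSet, Set.prod_eq]
  exact analyticSet_loopSet_image (((hT.preimage continuous_fst).inter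
    (hS.preimage continuous_snd)).image_of_continuous (continuous_fst.path_trans continuous_snd))

theorem analyticSet_loopSet_pow {S : Set (FundamentalGroup X x)}
    (hS : AnalyticSet (loopSet S)) (n : ℕ) : AnalyticSet (loopSet (S ^ n)) := by
  induction n with
  | zero =>
    rw [pow_zero, ← Set.singleton_one, ← pathClass_refl, ← Set.image_singleton]
    exact analyticSet_loopSet_image isClosed_singleton.analyticSet
  | succ n ih =>
    rw [pow_succ]
    exact analyticSet_loopSet_mul ih hS

theorem analyticSet_loopSet_closure {S : Set (FundamentalGroup X x)}
    (hS : AnalyticSet (loopSet S)) :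
    AnalyticSet (loopSet (Subgroup.closure S : Set (FundamentalGroup X x))) := by
  have : (Subgroup.closure S : Set (FundamentalGroup X x)) = ⋃ n : ℕ, (S ∪ S⁻¹) ^ n := by
    rw [← Submonoid.coe_closure_eq_iUnion_pow, ← Subgroup.closure_toSubmonoid]
    rfl
  rw [this, loopSet, Set.preimage_iUnion]
  refine AnalyticSet.iUnion fun n => analyticSet_loopSet_pow ?_ n
  rw [loopSet, Set.preimage_union, ← loopSet, ← loopSet, loopSet_inv]
  exact hS.union (hS.preimage Path.continuous_symm)

theorem analyticSet_loopSet_commutatorSet :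
    AnalyticSet (loopSet (commutatorSet (FundamentalGroup X x))) := by
  have : commutatorSet (FundamentalGroup X x) =
      pathClass '' Set.range fun pq : Path x x × Path x x => commutatorLoop pq.1 pq.2 := by
    ext g
    constructor
    · rintro ⟨a, b, rfl⟩
      obtain ⟨p, rfl⟩ := pathClass_surjective a
      obtain ⟨q, rfl⟩ := pathClass_surjective b
      exact ⟨_, ⟨(p, q), rfl⟩, pathClass_commutatorLoop p q⟩
    · rintro ⟨_, ⟨⟨p, q⟩, rfl⟩, rfl⟩
      exact ⟨_, _, (pathClass_commutatorLoop p q).symm⟩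
  rw [this]
  exact analyticSet_loopSet_image (analyticSet_range_of_polishSpace continuous_commutatorLoop)

theorem analyticSet_loopSet_setOf_pow_mem {S : Set (FundamentalGroup X x)}
    (hS : AnalyticSet (loopSet S)) : AnalyticSet (loopSet {g | ∃ n, 0 < n ∧ g ^ n ∈ S}) := by
  have : loopSet {g | ∃ n, 0 < n ∧ g ^ n ∈ S} =
      ⋃ n : ℕ, (fun l => loopPow l (n + 1)) ⁻¹' loopSet S := by
    ext l
    simp only [loopSet, Set.mem_preimage, Set.mem_iUnion, pathClass_loopPow]
    constructor
    · rintro ⟨n, hn, h⟩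
      exact ⟨n - 1, by rwa [Nat.sub_add_cancel hn]⟩
    · rintro ⟨n, h⟩
      exact ⟨n + 1, n.succ_pos, h⟩
  rw [this]
  exact AnalyticSet.iUnion fun n => hS.preimage (continuous_loopPow (n + 1))

end LoopSet

theorem stmt13_general (X : Type) [TopologicalSpace X] [PolishSpace X]
    (x : X) :
    MeasureTheory.AnalyticSet {l : Path x x | ∃ n : ℕ, 0 < n ∧
      pathClass l ^ n ∈ commutator (FundamentalGroup X x)} := by
  rw [commutator_eq_closure]
  exact analyticSet_loopSet_setOf_pow_mem
    (analyticSet_loopSet_closure analyticSet_loopSet_commutatorSet)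

/-- For a path connected Polish space `X` with basepoint `x`, the set of
loops `l` at `x` such that some positive power of the class `[l]` lies in the commutator
subgroup of `π₁(X,x)` is an analytic subset of the loop space.  (This is the loop set of
the kernel of `π₁(X,x) → Ab(X)/tor(Ab(X))`.) -/
theorem stmt13 (X : Type) [TopologicalSpace X] [PolishSpace X] [PathConnectedSpace X]
    (x : X) :
    MeasureTheory.AnalyticSet {l : Path x x | ∃ n : ℕ, 0 < n ∧
      pathClass l ^ n ∈ commutator (FundamentalGroup X x)} :=
  stmt13_general X x
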